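/- arXiv:2409.10664 — 5 statements merged into one kernel-verified Lean document; each statement's English description precedes it below -/
import Mathlib

section
/- Let f : ℝⁿ → ℝ be differentiable, g : ℝⁿ → ℝ convex, α > 0, x ∈ ℝⁿ, and z = prox_{αg}(x - α∇f(x)). Then ⟨∇f(x), z - x⟩ + g(z) - g(x) ≤ -(1/α)‖x - z‖². -/
open scoped RealInnerProductSpace
open Filter Set Topology

/-!
The proximal point `z` satisfies the variational inequality `⟪v - z, x - z⟫ ≤ α (g x - g z)` with
`v = x - α ∇f(x)`: compare the prox objective at `z` with its value at `z + t (x - z)`, bound `g`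
there by convexity, divide by `t` and let `t → 0⁺`. Expanding `v - z = (x - z) - α ∇f(x)` then
gives the descent inequality.
-/

theorem le_of_forall_mem_Ioc_le_add_mul {a b c : ℝ} (h : ∀ t ∈ Ioc (0 : ℝ) 1, a ≤ b + t * c) :
    a ≤ b := by
  have hlim : Tendsto (fun t : ℝ => b + t * c) (𝓝[>] 0) (𝓝 b) :=
    ((by fun_prop : Continuous fun t : ℝ => b + t * c).tendsto' 0 b (by simp)).mono_left
      nhdsWithin_le_nhds
  exact ge_of_tendsto hlim (eventually_of_mem (Ioc_mem_nhdsGT one_pos) h)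

theorem ConvexOn.le_add_mul_sub {E : Type*} [AddCommGroup E] [Module ℝ E] {s : Set E} {h : E → ℝ}
    (hh : ConvexOn ℝ s h) {x z : E} (hz : z ∈ s) (hx : x ∈ s) {t : ℝ} (ht₀ : 0 ≤ t) (ht₁ : t ≤ 1) :
    h (z + t • (x - z)) ≤ h z + t * (h x - h z) := by
  have hcomb : z + t • (x - z) = (1 - t) • z + t • x := by module
  calc h (z + t • (x - z)) ≤ (1 - t) • h z + t • h x := by
        rw [hcomb]; exact hh.2 hz hx (by linarith) ht₀ (by ring)
    _ = h z + t * (h x - h z) := by simp only [smul_eq_mul]; ring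

section InnerProductSpace

variable {E : Type*} [NormedAddCommGroup E] [InnerProductSpace ℝ E]

theorem norm_add_smul_sq (a d : E) (t : ℝ) :
    ‖a + t • d‖ ^ 2 = ‖a‖ ^ 2 + 2 * t * ⟪a, d⟫ + t ^ 2 * ‖d‖ ^ 2 := by
  rw [norm_add_sq_real, real_inner_smul_right, norm_smul, mul_pow, Real.norm_eq_abs, sq_abs]
  ring

theorem ConvexOn.inner_sub_le_of_isMinOn_add_norm_sq {s : Set E} {h : E → ℝ}
    (hh : ConvexOn ℝ s h) {v x z : E} (hz : z ∈ s) (hx : x ∈ s)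
    (hmin : IsMinOn (fun u => h u + ‖u - v‖ ^ 2 / 2) s z) :
    ⟪v - z, x - z⟫ ≤ h x - h z := by
  refine le_of_forall_mem_Ioc_le_add_mul (c := ‖x - z‖ ^ 2 / 2) fun t ⟨ht₀, ht₁⟩ => ?_
  have hmem : z + t • (x - z) ∈ s := hh.1.add_smul_sub_mem hz hx ⟨ht₀.le, ht₁⟩
  have hobj : h z + ‖z - v‖ ^ 2 / 2 ≤ h (z + t • (x - z)) + ‖z + t • (x - z) - v‖ ^ 2 / 2 :=
    hmin hmem
  have hseg := hh.le_add_mul_sub hz hx ht₀.le ht₁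
  rw [show z + t • (x - z) - v = z - v + t • (x - z) by abel, norm_add_smul_sq] at hobj
  refine le_of_mul_le_mul_left ?_ ht₀
  rw [← neg_sub z v, inner_neg_left]
  linear_combination hobj + hseg

end InnerProductSpace

theorem prox_grad_descent_inequality_general {n : ℕ}
    (g : EuclideanSpace ℝ (Fin n) → ℝ) (f' : EuclideanSpace ℝ (Fin n) → EuclideanSpace ℝ (Fin n))
    (hg : ConvexOn ℝ Set.univ g) (α : ℝ) (hα : 0 < α)
    (x z : EuclideanSpace ℝ (Fin n))
    (hz : ∀ u, α * g z + ‖z - (x - α • f' x)‖ ^ 2 / 2 ≤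
               α * g u + ‖u - (x - α • f' x)‖ ^ 2 / 2) :
    ⟪f' x, z - x⟫ + g z - g x ≤ -(1 / α) * ‖x - z‖ ^ 2 := by
  have hvi : ⟪x - α • f' x - z, x - z⟫ ≤ α * g x - α * g z :=
    (hg.smul hα.le).inner_sub_le_of_isMinOn_add_norm_sq (mem_univ z) (mem_univ x)
      fun u _ => hz u
  have hlhs : ⟪x - α • f' x - z, x - z⟫ = ‖x - z‖ ^ 2 + α * ⟪f' x, z - x⟫ := by
    rw [sub_right_comm, inner_sub_left, real_inner_self_eq_norm_sq, real_inner_smul_left,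
      ← neg_sub z x, inner_neg_right]
    ring
  rw [hlhs] at hvi
  rw [neg_mul, one_div_mul_eq_div, le_neg, div_le_iff₀ hα]
  linear_combination hvi

/-- Key descent inequality for the proximal gradient dynamics:
`⟨∇f(x), z - x⟩ + g(z) - g(x) ≤ -(1/α)‖x - z‖²` where
`z = prox_{αg}(x - α∇f(x))`. -/
theorem prox_grad_descent_inequality {n : ℕ}
    (f g : EuclideanSpace ℝ (Fin n) → ℝ) (f' : EuclideanSpace ℝ (Fin n) → EuclideanSpace ℝ (Fin n))
    (hf : ∀ y, HasGradientAt f (f' y) y)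
    (hg : ConvexOn ℝ Set.univ g) (α : ℝ) (hα : 0 < α)
    (x z : EuclideanSpace ℝ (Fin n))
    (hz : ∀ u, α * g z + ‖z - (x - α • f' x)‖ ^ 2 / 2 ≤
               α * g u + ‖u - (x - α • f' x)‖ ^ 2 / 2) :
    ⟪f' x, z - x⟫ + g z - g x ≤ -(1 / α) * ‖x - z‖ ^ 2 :=
  prox_grad_descent_inequality_general g f' hg α hα x z hz
end

section
/- Let f : ℝⁿ → ℝ be differentiable, g : ℝⁿ → ℝ convex, α > 0, x ∈ ℝⁿ, z = prox_{αg}(x - α∇f(x)), and let s ∈ ∇f(x) + ∂g(x) (i.e., s = ∇f(x) + v for some subgradient v of g at x). Then ⟨s, z - x⟩ ≤ -(1/α)‖x - z‖². -/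
set_option maxHeartbeats 1000000


open scoped RealInnerProductSpace

/-- For `z = prox_{αg}(x - α∇f(x))` and any `s = ∇f(x) + v` with `v ∈ ∂g(x)`,
`⟨s, z - x⟩ ≤ -(1/α)‖x - z‖²`. -/
theorem subgradient_prox_direction_inequality {n : ℕ}
    (f g : EuclideanSpace ℝ (Fin n) → ℝ)
    (f' : EuclideanSpace ℝ (Fin n) → EuclideanSpace ℝ (Fin n))
    (hf : ∀ y, HasGradientAt f (f' y) y)
    (hg : ConvexOn ℝ Set.univ g) (α : ℝ) (hα : 0 < α)
    (x z s v : EuclideanSpace ℝ (Fin n))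
    (hz : ∀ u, α * g z + ‖z - (x - α • f' x)‖ ^ 2 / 2 ≤
               α * g u + ‖u - (x - α • f' x)‖ ^ 2 / 2)
    (hv : ∀ y, g y ≥ g x + ⟪v, y - x⟫)
    (hs : s = f' x + v) :
    ⟪s, z - x⟫ ≤ -(1 / α) * ‖x - z‖ ^ 2 := by
  set w : EuclideanSpace ℝ (Fin n) := x - α • f' x with hw
  set p : EuclideanSpace ℝ (Fin n) := z - w with hpdef
  set q : EuclideanSpace ℝ (Fin n) := x - w with hqdef
  have expand : ∀ a b : ℝ, ‖a • p + b • q‖ ^ 2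
      = a ^ 2 * ‖p‖ ^ 2 + 2 * (a * b) * ⟪p, q⟫ + b ^ 2 * ‖q‖ ^ 2 := by
    intro a b
    rw [norm_add_sq_real, inner_smul_left, inner_smul_right, norm_smul, norm_smul,
      mul_pow, mul_pow]
    simp [sq_abs]
    ring
  have hzx : ‖z - x‖ ^ 2 = ‖p‖ ^ 2 - 2 * ⟪p, q⟫ + ‖q‖ ^ 2 := by
    have h : z - x = p - q := by rw [hpdef, hqdef]; abel
    rw [h, norm_sub_sq_real]
  -- strong minimality: compare with convex combination
  have key : ∀ t : ℝ, 0 < t → t ≤ 1 →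
      α * g z + ‖p‖ ^ 2 / 2 + (1 - t) * ‖z - x‖ ^ 2 / 2 ≤ α * g x + ‖q‖ ^ 2 / 2 := by
    intro t ht ht1
    have hcomb := hg.2 (Set.mem_univ z) (Set.mem_univ x) (by linarith : (0:ℝ) ≤ 1 - t)
      (le_of_lt ht) (by ring)
    have hu := hz ((1 - t) • z + t • x)
    have hnorm : ((1 - t) • z + t • x - w) = (1 - t) • p + t • q := by
      rw [hpdef, hqdef]; module
    rw [hnorm, expand] at hu
    rw [hzx]
    have hαt := mul_le_mul_of_nonneg_left hcomb (le_of_lt hα)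
    rw [smul_eq_mul, smul_eq_mul] at hαt
    have hlin : t * (α * g z + ‖p‖ ^ 2 / 2 + (1 - t) * (‖p‖ ^ 2 - 2 * ⟪p, q⟫ + ‖q‖ ^ 2) / 2)
        ≤ t * (α * g x + ‖q‖ ^ 2 / 2) := by nlinarith [hu, hαt]
    exact le_of_mul_le_mul_left hlin ht
  have h1 : α * g z + ‖p‖ ^ 2 / 2 + ‖z - x‖ ^ 2 / 2 ≤ α * g x + ‖q‖ ^ 2 / 2 := by
    have hle : ∀ ε : ℝ, 0 < ε →
        α * g z + ‖p‖ ^ 2 / 2 + ‖z - x‖ ^ 2 / 2 ≤ α * g x + ‖q‖ ^ 2 / 2 + ε := by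
      intro ε hε
      set t : ℝ := min 1 (ε / (‖z - x‖ ^ 2 / 2 + 1)) with htdef
      have hd : 0 < ‖z - x‖ ^ 2 / 2 + 1 := by positivity
      have ht : 0 < t := lt_min one_pos (div_pos hε hd)
      have ht1 : t ≤ 1 := min_le_left _ _
      have hk := key t ht ht1
      have htε : t * (‖z - x‖ ^ 2 / 2) ≤ ε := by
        have h2 : t ≤ ε / (‖z - x‖ ^ 2 / 2 + 1) := min_le_right _ _
        have := mul_le_mul_of_nonneg_right h2 (by positivity : (0:ℝ) ≤ ‖z - x‖ ^ 2 / 2)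
        calc t * (‖z - x‖ ^ 2 / 2) ≤ ε / (‖z - x‖ ^ 2 / 2 + 1) * (‖z - x‖ ^ 2 / 2) := this
          _ ≤ ε := by rw [div_mul_eq_mul_div, div_le_iff₀ hd]; nlinarith
      nlinarith
    by_contra hcon
    push_neg at hcon
    have := hle ((α * g z + ‖p‖ ^ 2 / 2 + ‖z - x‖ ^ 2 / 2 - (α * g x + ‖q‖ ^ 2 / 2)) / 2)
      (by linarith)
    linarith
  -- expand p, q
  have hq2 : ‖q‖ ^ 2 = α ^ 2 * ‖f' x‖ ^ 2 := by
    have : q = α • f' x := by rw [hqdef, hw]; abel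
    rw [this, norm_smul, mul_pow, Real.norm_eq_abs, sq_abs]
  have hp2 : ‖p‖ ^ 2 = ‖z - x‖ ^ 2 + 2 * α * ⟪f' x, z - x⟫ + α ^ 2 * ‖f' x‖ ^ 2 := by
    have h : p = (z - x) + α • f' x := by rw [hpdef, hw]; abel
    rw [h, norm_add_sq_real, inner_smul_right, norm_smul, mul_pow, Real.norm_eq_abs,
      sq_abs, real_inner_comm (z - x) (f' x)]
    ring
  have hsub := hv z
  have hsub' : α * (g x + ⟪v, z - x⟫) ≤ α * g z := mul_le_mul_of_nonneg_left hsub (le_of_lt hα)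
  have hinner : ⟪s, z - x⟫ = ⟪f' x, z - x⟫ + ⟪v, z - x⟫ := by
    rw [hs, inner_add_left]
  have hfinal : α * ⟪s, z - x⟫ ≤ -‖z - x‖ ^ 2 := by
    rw [hinner]
    nlinarith [h1, hsub', hp2, hq2]
  rw [norm_sub_rev x z,
    show -(1 / α) * ‖z - x‖ ^ 2 = (-‖z - x‖ ^ 2) / α by field_simp,
    le_div_iff₀ hα]
  nlinarith [hfinal]
end

section
/- Let f : ℝⁿ → ℝ be differentiable, g : ℝⁿ → ℝ convex, α > 0, μ > 0, and suppose F = f + g attains a global minimum value F*. If for all x, (1/2)‖x - prox_{αg}(x - α∇f(x))‖₂² ≥ μα²(F(x) - F*), then for all x that are not minimizers and all s ∈ ∇f(x) + ∂g(x), ‖s‖₂² ≥ (2μ)(F(x) - F*). -/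
open scoped RealInnerProductSpace

/-- The paper's exponential-convergence condition implies the proximal
Kurdyka–Łojasiewicz condition with exponent 1/2:
`min_{s ∈ ∇f(x)+∂g(x)} ‖s‖² ≥ 2μ(F(x) - F*)`. -/
theorem condition_implies_KL {n : ℕ}
    (f g : EuclideanSpace ℝ (Fin n) → ℝ)
    (f' prox : EuclideanSpace ℝ (Fin n) → EuclideanSpace ℝ (Fin n))
    (hf : ∀ y, HasGradientAt f (f' y) y)
    (hg : ConvexOn ℝ Set.univ g) (α μ : ℝ) (hα : 0 < α) (hμ : 0 < μ)
    (Fstar : ℝ)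
    (hmin : ∀ x, Fstar ≤ f x + g x)
    (hattained : ∃ xstar, f xstar + g xstar = Fstar)
    (hprox : ∀ x u, α * g (prox x) + ‖prox x - (x - α • f' x)‖ ^ 2 / 2 ≤
                    α * g u + ‖u - (x - α • f' x)‖ ^ 2 / 2)
    (hcond : ∀ x, (1 / 2) * ‖x - prox x‖ ^ 2 ≥ μ * α ^ 2 * (f x + g x - Fstar)) :
    ∀ x s v, (∀ y, g y ≥ g x + ⟪v, y - x⟫) → s = f' x + v →
      f x + g x ≠ Fstar →
      ‖s‖ ^ 2 ≥ 2 * μ * (f x + g x - Fstar) := by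
  intro x s v hv hs hne
  set z := prox x with hz
  set w := x - α • f' x with hw
  have hδ : ∀ t : ℝ, 0 < t → t ≤ 1 →
      0 ≤ α * (g x - g z) + ⟪z - w, x - z⟫ + t * ‖x - z‖ ^ 2 / 2 := by
    intro t ht ht1
    have h1 := hprox x (z + t • (x - z))
    rw [← hz, ← hw] at h1
    have hcv := hg.2 (Set.mem_univ z) (Set.mem_univ x)
      (by linarith : (0:ℝ) ≤ 1 - t) (le_of_lt ht) (by ring)
    have heq : (1 - t) • z + t • x = z + t • (x - z) := by module
    rw [heq] at hcv
    simp only [smul_eq_mul] at hcv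
    have hexp : ‖z + t • (x - z) - w‖ ^ 2
        = ‖z - w‖ ^ 2 + 2 * (t * ⟪z - w, x - z⟫) + t ^ 2 * ‖x - z‖ ^ 2 := by
      have h9 : z + t • (x - z) - w = (z - w) + t • (x - z) := by abel
      rw [h9, norm_add_sq_real, real_inner_smul_right, norm_smul]
      simp [mul_pow, abs_of_pos ht]
    rw [hexp] at h1
    have hcv' : α * g (z + t • (x - z)) ≤ α * ((1 - t) * g z + t * g x) :=
      mul_le_mul_of_nonneg_left hcv hα.le
    have h1' : 0 ≤ t * (α * (g x - g z) + ⟪z - w, x - z⟫) + t ^ 2 * (‖x - z‖ ^ 2 / 2) := by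
      nlinarith
    nlinarith [mul_pos ht ht, ht]
  have hc : 0 ≤ α * (g x - g z) + ⟪z - w, x - z⟫ := by
    by_contra h
    push_neg at h
    set c := α * (g x - g z) + ⟪z - w, x - z⟫ with hcdef
    set K := ‖x - z‖ ^ 2 / 2 with hK
    have hK0 : 0 ≤ K := by positivity
    rcases eq_or_lt_of_le hK0 with hK0' | hKpos
    · have h2 := hδ 1 one_pos le_rfl
      have : (1:ℝ) * ‖x - z‖ ^ 2 / 2 = K := by rw [hK]; ring
      rw [this] at h2
      linarith
    · have htpos : 0 < -c / (2 * K) := div_pos (neg_pos.2 h) (by linarith)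
      set t := min 1 (-c / (2 * K)) with htdef
      have ht0 : 0 < t := lt_min one_pos htpos
      have ht1 : t ≤ 1 := min_le_left _ _
      have h2 := hδ t ht0 ht1
      have h3 : t * K ≤ (-c / (2 * K)) * K :=
        mul_le_mul_of_nonneg_right (min_le_right _ _) (le_of_lt hKpos)
      have h4 : (-c / (2 * K)) * K = -c / 2 := by field_simp
      have h5 : t * ‖x - z‖ ^ 2 / 2 = t * K := by rw [hK]; ring
      rw [h5] at h2
      linarith
  have hsplit : ⟪z - w, x - z⟫ = -‖x - z‖ ^ 2 + α * ⟪f' x, x - z⟫ := by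
    have h9 : z - w = -(x - z) + α • f' x := by rw [hw]; abel
    rw [h9, inner_add_left, real_inner_smul_left, inner_neg_left,
      real_inner_self_eq_norm_sq]
  have hsub := hv z
  have hkey : ‖x - z‖ ^ 2 ≤ α * ⟪s, x - z⟫ := by
    have hvz : ⟪v, z - x⟫ = -⟪v, x - z⟫ := by
      rw [show z - x = -(x - z) by abel, inner_neg_right]
    have hss : ⟪s, x - z⟫ = ⟪f' x, x - z⟫ + ⟪v, x - z⟫ := by
      rw [hs, inner_add_left]
    rw [hsplit] at hc
    rw [hvz] at hsub
    nlinarith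
  have hcx := hcond x
  rw [← hz] at hcx
  by_cases hzx : x - z = 0
  · rw [hzx] at hcx
    simp at hcx
    have h10 := hmin x
    exfalso
    apply hne
    have h9 : 0 < μ * α ^ 2 := by positivity
    have h11 : f x + g x - Fstar ≤ 0 := by nlinarith
    linarith
  · have hnz : 0 < ‖x - z‖ := norm_pos_iff.mpr hzx
    have hCS : ⟪s, x - z⟫ ≤ ‖s‖ * ‖x - z‖ := real_inner_le_norm s (x - z)
    have h5 : ‖x - z‖ ^ 2 ≤ α * (‖s‖ * ‖x - z‖) := by
      calc ‖x - z‖ ^ 2 ≤ α * ⟪s, x - z⟫ := hkey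
        _ ≤ α * (‖s‖ * ‖x - z‖) := mul_le_mul_of_nonneg_left hCS (le_of_lt hα)
    clear hδ hc hsplit hsub hkey hprox hcond hv hf hg
    have e1 : ‖x - z‖ * ‖x - z‖ = ‖x - z‖ ^ 2 := (pow_two _).symm
    have e2 : (α * ‖s‖) * ‖x - z‖ = α * (‖s‖ * ‖x - z‖) := mul_assoc _ _ _
    have h5' : ‖x - z‖ * ‖x - z‖ ≤ (α * ‖s‖) * ‖x - z‖ := by linarith
    have h6 : ‖x - z‖ ≤ α * ‖s‖ := le_of_mul_le_mul_right h5' hnz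
    have h7 : ‖x - z‖ ^ 2 ≤ (α * ‖s‖) ^ 2 := pow_le_pow_left₀ (norm_nonneg _) h6 2
    have h8 : (α * ‖s‖) ^ 2 = α ^ 2 * ‖s‖ ^ 2 := mul_pow α ‖s‖ 2
    have h9 : (0:ℝ) < α ^ 2 := pow_pos hα 2
    have h11 : 2 * (μ * α ^ 2 * (f x + g x - Fstar)) ≤ α ^ 2 * ‖s‖ ^ 2 := by linarith
    have h12 : (2 * μ * (f x + g x - Fstar)) * α ^ 2 = 2 * (μ * α ^ 2 * (f x + g x - Fstar)) := by
      ring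
    have h13 : α ^ 2 * ‖s‖ ^ 2 = ‖s‖ ^ 2 * α ^ 2 := by ring
    exact le_of_mul_le_mul_right (by linarith) h9
end

section
/- Let f : ℝⁿ → ℝ be differentiable, g : ℝⁿ → ℝ convex, α > 0, and let x : [0,∞) → ℝⁿ be a differentiable solution of the proximal gradient dynamics ẋ(t) = -x(t) + prox_{αg}(x(t) - α∇f(x(t))). Then the function t ↦ f(x(t)) + g(x(t)) is nonincreasing. -/
/-!
Along a trajectory, `x(t) + h ẋ(t) = (1 - h) x(t) + h p` with `p = prox_{αg}(x(t) - α∇f(x(t)))`,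
so convexity bounds the upper right Dini derivative of `g ∘ x` by `g p - g (x t)` (the
gap between `x(t + h)` and that chord is `o(h)`, and `g` is locally Lipschitz). The Dini
derivative of `f ∘ x + g ∘ x` is then at most `⟪∇f(x(t)), p - x(t)⟫ + g p - g (x t)`, which
is `≤ 0` by comparing the prox objective at `p` with its value at `x(t)`.
-/

open Set Filter Topology Asymptotics

open scoped RealInnerProductSpace

lemma inner_add_sub_le_of_prox_le {E : Type*} [NormedAddCommGroup E] [InnerProductSpace ℝ E]
    {g : E → ℝ} {α : ℝ} (hα : 0 < α) {y w p : E}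
    (hp : α * g p + ‖p - (y - α • w)‖ ^ 2 / 2 ≤ α * g y + ‖y - (y - α • w)‖ ^ 2 / 2) :
    ⟪w, p - y⟫ + g p - g y ≤ -(‖p - y‖ ^ 2 / (2 * α)) := by
  have hexpand : ‖p - (y - α • w)‖ ^ 2 = ‖p - y‖ ^ 2 + 2 * α * ⟪w, p - y⟫ + ‖α • w‖ ^ 2 := by
    rw [show p - (y - α • w) = (p - y) + α • w by abel, norm_add_sq_real, real_inner_smul_right,
      real_inner_comm]
    ring
  rw [hexpand, show y - (y - α • w) = α • w by abel] at hp
  rw [le_neg, div_le_iff₀ (by positivity)]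
  linarith

lemma ConvexOn.map_add_smul_sub_le {E : Type*} [AddCommGroup E] [Module ℝ E] {s : Set E}
    {g : E → ℝ} (hg : ConvexOn ℝ s g) {y v : E} (hy : y ∈ s) (hyv : y + v ∈ s) {h : ℝ}
    (h₀ : 0 ≤ h) (h₁ : h ≤ 1) : g (y + h • v) - g y ≤ h * (g (y + v) - g y) := by
  have hcomb : y + h • v = (1 - h) • y + h • (y + v) := by
    rw [smul_add, sub_smul, one_smul]
    abel
  have := hg.2 hy hyv (sub_nonneg.2 h₁) h₀ (sub_add_cancel 1 h)
  rw [smul_eq_mul, smul_eq_mul] at this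
  rw [hcomb]
  linarith

lemma LocallyLipschitz.isBigO_comp_sub_comp {α E F : Type*} [SeminormedAddCommGroup E]
    [SeminormedAddCommGroup F] {g : E → F} (hg : LocallyLipschitz g) {l : Filter α}
    {u w : α → E} {y : E} (hu : Tendsto u l (𝓝 y)) (hw : Tendsto w l (𝓝 y)) :
    (fun a => g (u a) - g (w a)) =O[l] fun a => u a - w a := by
  obtain ⟨K, U, hU, hK⟩ := hg y
  refine IsBigO.of_bound K ?_
  filter_upwards [hu hU, hw hU] with a hua hwa
  rw [← dist_eq_norm, ← dist_eq_norm]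
  exact hK.dist_le_mul _ hua _ hwa

lemma ConvexOn.eventually_slope_comp_lt {E : Type*} [NormedAddCommGroup E] [NormedSpace ℝ E]
    [FiniteDimensional ℝ E] {g : E → ℝ} (hg : ConvexOn ℝ univ g) {x : ℝ → E}
    {v : E} {t r : ℝ} (hx : HasDerivWithinAt x v (Ioi t) t)
    (hr : g (x t + v) - g (x t) < r) :
    ∀ᶠ z in 𝓝[>] t, slope (g ∘ x) t z < r := by
  set ℓ : ℝ → E := fun z => x t + (z - t) • v
  have hℓ : Tendsto ℓ (𝓝[>] t) (𝓝 (x t)) := by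
    refine tendsto_nhdsWithin_of_tendsto_nhds ?_
    simpa [ℓ] using ((continuous_sub_right t).smul continuous_const).const_add (x t) |>.tendsto t
  have hxℓ : (fun z => x z - ℓ z) =o[𝓝[>] t] fun z => z - t := by
    simpa only [ℓ, sub_add_eq_sub_sub] using hasDerivWithinAt_iff_isLittleO.1 hx
  have hgap : (fun z => g (x z) - g (ℓ z)) =o[𝓝[>] t] fun z => z - t :=
    (hg.locallyLipschitz.isBigO_comp_sub_comp hx.continuousWithinAt hℓ).trans_isLittleO hxℓ
  have hε : 0 < (r - (g (x t + v) - g (x t))) / 2 := by linarith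
  filter_upwards [hgap.def hε, Ioc_mem_nhdsGT (lt_add_one t)] with z hz ⟨htz, hz1⟩
  have hh : 0 < z - t := sub_pos.2 htz
  have hchord : g (ℓ z) - g (x t) ≤ (z - t) * (g (x t + v) - g (x t)) :=
    hg.map_add_smul_sub_le (mem_univ _) (mem_univ _) hh.le (by linarith)
  rw [Real.norm_of_nonneg hh.le, Real.norm_eq_abs] at hz
  rw [slope_def_field, div_lt_iff₀ hh]
  simp only [Function.comp_apply]
  linarith [le_abs_self (g (x z) - g (ℓ z)), mul_pos hε hh]

lemma eventually_slope_add_comp_lt {E : Type*} [NormedAddCommGroup E] [InnerProductSpace ℝ E]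
    [FiniteDimensional ℝ E] {f g : E → ℝ} {x : ℝ → E} {w v : E} {t r : ℝ}
    (hf : HasGradientAt f w (x t)) (hg : ConvexOn ℝ univ g) (hx : HasDerivWithinAt x v (Ioi t) t)
    (hr : ⟪w, v⟫ + (g (x t + v) - g (x t)) < r) :
    ∀ᶠ z in 𝓝[>] t, slope (fun s => f (x s) + g (x s)) t z < r := by
  set δ := r - (⟪w, v⟫ + (g (x t + v) - g (x t)))
  have hδ : 0 < δ / 2 := by linarith
  have hfx : HasDerivWithinAt (f ∘ x) ⟪w, v⟫ (Ioi t) t :=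
    hf.hasFDerivAt.comp_hasDerivWithinAt t hx
  filter_upwards [hfx.limsup_slope_le' (lt_irrefl t) (lt_add_of_pos_right _ hδ),
    hg.eventually_slope_comp_lt hx (lt_add_of_pos_right _ hδ)] with z hfz hgz
  have hsum : slope (fun s => f (x s) + g (x s)) t z = slope (f ∘ x) t z + slope (g ∘ x) t z := by
    simp only [slope_def_field, Function.comp_apply]
    ring
  linarith

lemma le_of_forall_frequently_slope_right_lt {φ : ℝ → ℝ} {a b : ℝ} (hab : a ≤ b)
    (hφ : ContinuousOn φ (Icc a b))
    (hslope : ∀ t ∈ Ico a b, ∀ r > 0, ∃ᶠ z in 𝓝[>] t, slope φ t z < r) : φ b ≤ φ a :=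
  image_le_of_liminf_slope_right_le_deriv_boundary (B := fun _ => φ a) (B' := fun _ => 0) hφ
    le_rfl continuousOn_const (fun _ _ => hasDerivWithinAt_const _ _ _) hslope
    (right_mem_Icc.2 hab)

/-- Theorem 3(i): the cost `F = f + g` is nonincreasing along differentiable
solutions of the proximal gradient dynamics `ẋ = -x + prox_{αg}(x - α∇f(x))`. -/
theorem cost_nonincreasing_along_prox_grad {n : ℕ}
    (f g : EuclideanSpace ℝ (Fin n) → ℝ)
    (f' prox : EuclideanSpace ℝ (Fin n) → EuclideanSpace ℝ (Fin n))
    (hf : ∀ y, HasGradientAt f (f' y) y)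
    (hg : ConvexOn ℝ Set.univ g) (α : ℝ) (hα : 0 < α)
    (hprox : ∀ y u, α * g (prox y) + ‖prox y - (y - α • f' y)‖ ^ 2 / 2 ≤
                    α * g u + ‖u - (y - α • f' y)‖ ^ 2 / 2)
    (x : ℝ → EuclideanSpace ℝ (Fin n))
    (hx : ∀ t, 0 ≤ t → HasDerivAt x (-x t + prox (x t)) t) :
    ∀ t₁ t₂, 0 ≤ t₁ → t₁ ≤ t₂ →
      f (x t₂) + g (x t₂) ≤ f (x t₁) + g (x t₁) := by
  intro t₁ t₂ ht₁ ht₁₂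
  refine le_of_forall_frequently_slope_right_lt (φ := fun t => f (x t) + g (x t)) ht₁₂
    (fun t ht => ?_) (fun t ht r hr => ?_)
  · have hxt := (hx t (ht₁.trans ht.1)).continuousAt
    exact ((hf (x t)).hasFDerivAt.continuousAt.comp hxt).add
      (hg.locallyLipschitz.continuous.continuousAt.comp hxt) |>.continuousWithinAt
  · refine (eventually_slope_add_comp_lt (hf (x t)) hg
      (hx t (ht₁.trans ht.1)).hasDerivWithinAt ?_).frequently
    have hdescent := inner_add_sub_le_of_prox_le (g := g) hα (hprox (x t) (x t))
    rw [add_neg_cancel_left, neg_add_eq_sub]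
    linarith [div_nonneg (sq_nonneg ‖prox (x t) - x t‖) (by positivity : (0 : ℝ) ≤ 2 * α)]
end

section
/- Let f : ℝⁿ → ℝ be differentiable, g : ℝⁿ → ℝ convex, and 0 < α' ≤ α. Then for every x, D_g(x, α') ≥ D_g(x, α), where D_g(x, β) = (2/β)·sup_y { ⟨∇f(x), x - y⟩ - (1/(2β))‖x - y‖² + g(x) - g(y) }. Consequently, if the proximal PL condition (1/2)D_g(x, α) ≥ μ(F(x) - F*) holds for α, it holds for every α' ∈ (0, α]. -/
open scoped RealInnerProductSpace

/-- `D_g(x, β)` from the proximal PL condition of Karimi–Nutini–Schmidt. -/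
noncomputable def Dg {n : ℕ} (f g : EuclideanSpace ℝ (Fin n) → ℝ)
    (f' : EuclideanSpace ℝ (Fin n) → EuclideanSpace ℝ (Fin n))
    (x : EuclideanSpace ℝ (Fin n)) (β : ℝ) : ℝ :=
  (2 / β) * sSup {r : ℝ | ∃ y,
    r = ⟪f' x, x - y⟫ - ‖x - y‖ ^ 2 / (2 * β) + g x - g y}

/-- Corollary 9: `D_g(x, α') ≥ D_g(x, α)` for `0 < α' ≤ α`; hence the proximal
PL condition for `α` holds for every `α' ∈ (0, α]`. -/
theorem Dg_antitone_and_PL_persists {n : ℕ}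
    (f g : EuclideanSpace ℝ (Fin n) → ℝ)
    (f' : EuclideanSpace ℝ (Fin n) → EuclideanSpace ℝ (Fin n))
    (hf : ∀ y, HasGradientAt f (f' y) y)
    (hg : ConvexOn ℝ Set.univ g) (α α' : ℝ) (hα' : 0 < α') (hα'α : α' ≤ α)
    (μ Fstar : ℝ) (hμ : 0 < μ)
    (hmin : ∀ y, Fstar ≤ f y + g y)
    (hattained : ∃ xstar, f xstar + g xstar = Fstar) :
    (∀ x, Dg f g f' x α' ≥ Dg f g f' x α) ∧
    ((∀ x, (1 / 2) * Dg f g f' x α ≥ μ * (f x + g x - Fstar)) →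
      ∀ x, (1 / 2) * Dg f g f' x α' ≥ μ * (f x + g x - Fstar)) := by
  have hα : 0 < α := lt_of_lt_of_le hα' hα'α
  have key : ∀ x, Dg f g f' x α' ≥ Dg f g f' x α := by
    intro x
    set S : ℝ → Set ℝ := fun β => {r : ℝ | ∃ y,
      r = ⟪f' x, x - y⟫ - ‖x - y‖ ^ 2 / (2 * β) + g x - g y} with hS
    have hne : ∀ β, (S β).Nonempty := fun β => ⟨_, x, rfl⟩
    set t := α' / α with htdef
    have ht0 : 0 < t := div_pos hα' hα
    have ht1 : t ≤ 1 := (div_le_one hα).mpr hα'α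
    have hpoint : ∀ y, ∃ y', (⟪f' x, x - y'⟫ - ‖x - y'‖ ^ 2 / (2 * α') + g x - g y')
        ≥ t * (⟪f' x, x - y⟫ - ‖x - y‖ ^ 2 / (2 * α) + g x - g y) := by
      intro y
      refine ⟨x + t • (y - x), ?_⟩
      have hxy : x - (x + t • (y - x)) = t • (x - y) := by module
      have hinner : ⟪f' x, x - (x + t • (y - x))⟫ = t * ⟪f' x, x - y⟫ := by
        rw [hxy, real_inner_smul_right]
      have hnorm : ‖x - (x + t • (y - x))‖ ^ 2 = t ^ 2 * ‖x - y‖ ^ 2 := by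
        rw [hxy, norm_smul, mul_pow, Real.norm_eq_abs, sq_abs]
      have heq : x + t • (y - x) = (1 - t) • x + t • y := by module
      have hgy : g (x + t • (y - x)) ≤ (1 - t) * g x + t * g y := by
        rw [heq]
        simpa [smul_eq_mul] using
          hg.2 (Set.mem_univ x) (Set.mem_univ y) (by linarith) ht0.le (by ring)
      have hta : t * α = α' := by rw [htdef]; field_simp
      have hq : t ^ 2 * ‖x - y‖ ^ 2 / (2 * α') = t * (‖x - y‖ ^ 2 / (2 * α)) := by
        rw [← hta]; field_simp
      rw [hinner, hnorm, hq]
      have hexp : t * (⟪f' x, x - y⟫ - ‖x - y‖ ^ 2 / (2 * α) + g x - g y)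
          = t * ⟪f' x, x - y⟫ - t * (‖x - y‖ ^ 2 / (2 * α)) + t * g x - t * g y := by
        ring
      rw [hexp]
      have hgy2 : (1 - t) * g x + t * g y = g x - t * g x + t * g y := by ring
      rw [hgy2] at hgy
      linarith
    by_cases hb : BddAbove (S α')
    · have h1 : sSup (S α) ≤ sSup (S α') / t := by
        apply csSup_le (hne α)
        rintro r ⟨y, rfl⟩
        obtain ⟨y', hy'⟩ := hpoint y
        have hmem : (⟪f' x, x - y'⟫ - ‖x - y'‖ ^ 2 / (2 * α') + g x - g y') ∈ S α' :=
          ⟨y', rfl⟩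
        have h2 := le_csSup hb hmem
        rw [le_div_iff₀ ht0]
        nlinarith
      show (2 / α') * sSup (S α') ≥ (2 / α) * sSup (S α)
      calc (2 / α) * sSup (S α) ≤ (2 / α) * (sSup (S α') / t) :=
            mul_le_mul_of_nonneg_left h1 (by positivity)
        _ = (2 / α') * sSup (S α') := by
            rw [htdef]
            field_simp
    · have hb2 : ¬ BddAbove (S α) := by
        rintro ⟨M, hM⟩
        apply hb
        refine ⟨M, ?_⟩
        rintro r ⟨y, rfl⟩
        have hle : (⟪f' x, x - y⟫ - ‖x - y‖ ^ 2 / (2 * α') + g x - g y)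
            ≤ (⟪f' x, x - y⟫ - ‖x - y‖ ^ 2 / (2 * α) + g x - g y) := by
          have : ‖x - y‖ ^ 2 / (2 * α) ≤ ‖x - y‖ ^ 2 / (2 * α') :=
            div_le_div_of_nonneg_left (by positivity) (by positivity) (by linarith)
          linarith
        exact hle.trans (hM ⟨y, rfl⟩)
      show (2 / α') * sSup (S α') ≥ (2 / α) * sSup (S α)
      rw [Real.sSup_of_not_bddAbove hb, Real.sSup_of_not_bddAbove hb2]
      simp
  refine ⟨key, fun h x => ?_⟩
  have h1 := key x
  have h2 := h x
  linarith
end
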